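/- Let a > 0 and c > 0. Define g(z) = a·(φ(z) − z·Φᶜ(z)) − c and w(z) = (a·φ(z) − c)/Φᶜ(z) for z ∈ ℝ. Then: (i) g is strictly decreasing on ℝ, with g(z) → +∞ as z → −∞ and g(z) → −c as z → +∞, so g has a unique zero z*; and (ii) z* is the unique global maximizer of w on ℝ. -/

import Mathlib

open MeasureTheory ProbabilityTheory Real

/-- Standard normal density. -/
noncomputable def stdPdf (x : ℝ) : ℝ := (Real.sqrt (2 * Real.pi))⁻¹ * Real.exp (-(x ^ 2) / 2)

/-- Standard normal CDF. -/
noncomputable def stdCdf (x : ℝ) : ℝ := ∫ u in Set.Iic x, stdPdf u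

/-- Standard normal complementary CDF. -/
noncomputable def stdCcdf (x : ℝ) : ℝ := 1 - stdCdf x

/-- Standard normal hazard rate. -/
noncomputable def hazard (x : ℝ) : ℝ := stdPdf x / stdCcdf x

open Filter Topology

/-!
Write `L(z) = φ(z) − z·Φᶜ(z)` for the standard normal loss function `E[(Z − z)⁺]`, so that
`g = a·L − c`. Since `φ' = −zφ`, we get `L' = −Φᶜ < 0`. At `−∞`, `L(z) ≥ −z·Φᶜ(z) → +∞`; at
`+∞`, the Mills-ratio bound `0 ≤ z·Φᶜ(z) ≤ φ(z)` squeezes `L` to `0`. Hence `g` has a unique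
zero `z*`, and since `w' = φ·g/(Φᶜ)²`, `w` strictly increases up to `z*` and strictly
decreases after it.
-/

lemma stdPdf_pos (x : ℝ) : 0 < stdPdf x := by
  unfold stdPdf
  positivity

lemma continuous_stdPdf : Continuous stdPdf := by
  unfold stdPdf
  fun_prop

lemma stdPdf_eq_mul_exp_neg_mul_sq :
    stdPdf = fun x => (Real.sqrt (2 * π))⁻¹ * Real.exp (-(1 / 2) * x ^ 2) := by
  funext x
  unfold stdPdf
  ring_nf

lemma integrable_stdPdf : Integrable stdPdf := by
  rw [stdPdf_eq_mul_exp_neg_mul_sq]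
  exact (integrable_exp_neg_mul_sq (by norm_num)).const_mul _

lemma integrable_mul_stdPdf : Integrable (fun u : ℝ => u * stdPdf u) := by
  rw [stdPdf_eq_mul_exp_neg_mul_sq]
  refine ((integrable_mul_exp_neg_mul_sq (b := 1 / 2) (by norm_num)).const_mul
    (Real.sqrt (2 * π))⁻¹).congr (Eventually.of_forall fun x => ?_)
  ring

lemma integral_stdPdf : ∫ x, stdPdf x = 1 := by
  rw [stdPdf_eq_mul_exp_neg_mul_sq, integral_const_mul, integral_gaussian,
    show π / (1 / 2) = 2 * π by ring, inv_mul_cancel₀ (by positivity)]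

lemma hasDerivAt_stdPdf (x : ℝ) : HasDerivAt stdPdf (-(x * stdPdf x)) x := by
  have h : HasDerivAt (fun y : ℝ => -(y ^ 2) / 2) (-x) x :=
    ((hasDerivAt_pow 2 x).fun_neg.div_const 2).congr_deriv (by ring)
  exact (h.exp.const_mul (Real.sqrt (2 * π))⁻¹).congr_deriv (by rw [stdPdf]; ring)

lemma tendsto_stdPdf_atTop : Tendsto stdPdf atTop (𝓝 0) := by
  have h : Tendsto (fun x : ℝ => -(x ^ 2) / 2) atTop atBot :=
    (tendsto_neg_atTop_atBot.comp (tendsto_pow_atTop two_ne_zero)).atBot_div_const two_pos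
  have h0 := (Real.tendsto_exp_atBot.comp h).const_mul (Real.sqrt (2 * π))⁻¹
  rw [mul_zero] at h0
  exact h0

lemma hasDerivAt_stdCdf (x : ℝ) : HasDerivAt stdCdf (stdPdf x) x := by
  have hsplit : stdCdf = fun y => stdCdf 0 + ∫ u in (0 : ℝ)..y, stdPdf u := by
    funext y
    have h := intervalIntegral.integral_Iic_sub_Iic (μ := volume) (a := 0) (b := y)
      integrable_stdPdf.integrableOn integrable_stdPdf.integrableOn
    unfold stdCdf
    linarith
  rw [hsplit]
  exact (intervalIntegral.integral_hasDerivAt_right integrable_stdPdf.intervalIntegrable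
    continuous_stdPdf.stronglyMeasurable.stronglyMeasurableAtFilter
    continuous_stdPdf.continuousAt).const_add _

lemma hasDerivAt_stdCcdf (x : ℝ) : HasDerivAt stdCcdf (-stdPdf x) x :=
  (hasDerivAt_stdCdf x).const_sub 1

lemma stdCcdf_eq_setIntegral_Ioi (x : ℝ) : stdCcdf x = ∫ u in Set.Ioi x, stdPdf u := by
  have h := intervalIntegral.integral_Iic_add_Ioi (μ := volume) (b := x)
    integrable_stdPdf.integrableOn integrable_stdPdf.integrableOn
  rw [integral_stdPdf] at h
  unfold stdCcdf stdCdf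
  linarith

lemma stdCcdf_pos (x : ℝ) : 0 < stdCcdf x := by
  have hsupp : Function.support stdPdf = Set.univ :=
    Set.eq_univ_of_forall fun y => (stdPdf_pos y).ne'
  rw [stdCcdf_eq_setIntegral_Ioi, setIntegral_pos_iff_support_of_nonneg_ae
    (Eventually.of_forall fun y => (stdPdf_pos y).le) integrable_stdPdf.integrableOn,
    hsupp, Set.univ_inter, Real.volume_Ioi]
  exact ENNReal.zero_lt_top

lemma tendsto_stdCcdf_atBot : Tendsto stdCcdf atBot (𝓝 1) := by
  have h := (aecover_Ioi tendsto_id).integral_tendsto_of_countably_generated integrable_stdPdf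
  rw [integral_stdPdf] at h
  exact h.congr fun x => (stdCcdf_eq_setIntegral_Ioi x).symm

lemma setIntegral_Ioi_mul_stdPdf (x : ℝ) : ∫ u in Set.Ioi x, u * stdPdf u = stdPdf x := by
  have h := integral_Ioi_of_hasDerivAt_of_tendsto (f := fun u => -stdPdf u)
    (f' := fun u => u * stdPdf u) (a := x) (m := 0) continuous_stdPdf.neg.continuousWithinAt
    (fun y _ => (hasDerivAt_stdPdf y).neg.congr_deriv (neg_neg _))
    integrable_mul_stdPdf.integrableOn (by simpa using tendsto_stdPdf_atTop.neg)
  simpa using h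

lemma mul_stdCcdf_le_stdPdf (x : ℝ) : x * stdCcdf x ≤ stdPdf x := by
  rcases le_or_gt x 0 with hx | hx
  · nlinarith [stdPdf_pos x, stdCcdf_pos x]
  · calc x * stdCcdf x = ∫ u in Set.Ioi x, x * stdPdf u := by
          rw [integral_const_mul, stdCcdf_eq_setIntegral_Ioi]
      _ ≤ ∫ u in Set.Ioi x, u * stdPdf u :=
          setIntegral_mono_on (integrable_stdPdf.const_mul x).integrableOn
            integrable_mul_stdPdf.integrableOn measurableSet_Ioi
            fun u hu => mul_le_mul_of_nonneg_right (le_of_lt hu) (stdPdf_pos u).le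
      _ = stdPdf x := setIntegral_Ioi_mul_stdPdf x

noncomputable def stdLoss (z : ℝ) : ℝ := stdPdf z - z * stdCcdf z

lemma hasDerivAt_stdLoss (z : ℝ) : HasDerivAt stdLoss (-stdCcdf z) z :=
  ((hasDerivAt_stdPdf z).sub ((hasDerivAt_id z).mul (hasDerivAt_stdCcdf z))).congr_deriv
    (by simp only [id]; ring)

lemma continuous_stdLoss : Continuous stdLoss :=
  continuous_iff_continuousAt.2 fun z => (hasDerivAt_stdLoss z).continuousAt

lemma strictAnti_stdLoss : StrictAnti stdLoss :=
  strictAnti_of_deriv_neg fun z => by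
    rw [(hasDerivAt_stdLoss z).deriv, neg_lt_zero]
    exact stdCcdf_pos z

lemma tendsto_stdLoss_atBot : Tendsto stdLoss atBot atTop := by
  have h : Tendsto (fun z : ℝ => -z * stdCcdf z) atBot atTop :=
    tendsto_neg_atBot_atTop.atTop_mul_pos one_pos tendsto_stdCcdf_atBot
  exact tendsto_atTop_mono (fun z => by
    rw [stdLoss]
    linarith [stdPdf_pos z]) h

lemma tendsto_stdLoss_atTop : Tendsto stdLoss atTop (𝓝 0) :=
  squeeze_zero' (Eventually.of_forall fun z => sub_nonneg.2 (mul_stdCcdf_le_stdPdf z))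
    ((eventually_ge_atTop 0).mono fun z hz => by
      unfold stdLoss
      linarith [mul_nonneg hz (stdCcdf_pos z).le])
    tendsto_stdPdf_atTop

lemma hasDerivAt_div_stdCcdf (a c z : ℝ) :
    HasDerivAt (fun y => (a * stdPdf y - c) / stdCcdf y)
      (stdPdf z * (a * stdLoss z - c) / stdCcdf z ^ 2) z :=
  ((((hasDerivAt_stdPdf z).const_mul a).sub_const c).div (hasDerivAt_stdCcdf z)
    (stdCcdf_pos z).ne').congr_deriv (by rw [stdLoss]; ring)

lemma existsUnique_eq_zero_of_strictAnti {f : ℝ → ℝ} {l : ℝ} (hanti : StrictAnti f)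
    (hcont : Continuous f) (hbot : Tendsto f atBot atTop) (htop : Tendsto f atTop (𝓝 l))
    (hl : l < 0) : ∃! z, f z = 0 := by
  obtain ⟨z, hz⟩ := mem_range_of_exists_le_of_exists_ge hcont
    ((htop.eventually_lt_const hl).exists.imp fun _ => le_of_lt)
    (hbot.eventually_ge_atTop 0).exists
  exact ⟨z, hz, fun y hy => hanti.injective (hy.trans hz.symm)⟩

lemma lt_of_hasDerivAt_pos_of_neg {f f' : ℝ → ℝ} {x₀ x : ℝ} (hf : ∀ x, HasDerivAt f (f' x) x)
    (hleft : ∀ x < x₀, 0 < f' x) (hright : ∀ x, x₀ < x → f' x < 0) (hx : x ≠ x₀) :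
    f x < f x₀ := by
  have hcont : Continuous f := continuous_iff_continuousAt.2 fun x => (hf x).continuousAt
  rcases hx.lt_or_gt with hlt | hgt
  · refine strictMonoOn_of_deriv_pos (convex_Iic x₀) hcont.continuousOn (fun y hy => ?_)
      hlt.le Set.self_mem_Iic hlt
    rw [interior_Iic] at hy
    rw [(hf y).deriv]
    exact hleft y hy
  · refine strictAntiOn_of_deriv_neg (convex_Ici x₀) hcont.continuousOn (fun y hy => ?_)
      Set.self_mem_Ici hgt.le hgt
    rw [interior_Ici] at hy
    rw [(hf y).deriv]
    exact hright y hy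

/-- Properties of the principal's optimal-threshold equation: `g(z) = a·(φ(z) − z·Φᶜ(z)) − c`
is strictly decreasing, tends to `+∞` at `−∞` and to `−c` at `+∞`, has a unique zero `z*`,
and `z*` is the unique global maximizer of the per-hire net utility
`w(z) = (a·φ(z) − c)/Φᶜ(z)`. -/
theorem optimal_threshold_characterization (a c : ℝ) (ha : 0 < a) (hc : 0 < c) :
    StrictAnti (fun z : ℝ => a * (stdPdf z - z * stdCcdf z) - c) ∧
    Tendsto (fun z : ℝ => a * (stdPdf z - z * stdCcdf z) - c) atBot atTop ∧
    Tendsto (fun z : ℝ => a * (stdPdf z - z * stdCcdf z) - c) atTop (nhds (-c)) ∧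
    ∃ zstar : ℝ,
      (a * (stdPdf zstar - zstar * stdCcdf zstar) - c = 0) ∧
      (∀ z : ℝ, a * (stdPdf z - z * stdCcdf z) - c = 0 → z = zstar) ∧
      (∀ z : ℝ, z ≠ zstar →
        (a * stdPdf z - c) / stdCcdf z
          < (a * stdPdf zstar - c) / stdCcdf zstar) := by
  set g : ℝ → ℝ := fun z => a * stdLoss z - c
  have hg_anti : StrictAnti g := fun x y hxy =>
    sub_lt_sub_right (mul_lt_mul_of_pos_left (strictAnti_stdLoss hxy) ha) c
  have hg_bot : Tendsto g atBot atTop := tendsto_atTop_add_const_right _ _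
    ((tendsto_const_mul_atTop_of_pos ha).2 tendsto_stdLoss_atBot)
  have hg_top : Tendsto g atTop (𝓝 (-c)) := by
    simpa only [mul_zero, zero_sub] using (tendsto_stdLoss_atTop.const_mul a).sub_const c
  have hg_cont : Continuous g := (continuous_stdLoss.const_mul a).sub continuous_const
  obtain ⟨zstar, hzero, hunique⟩ :=
    existsUnique_eq_zero_of_strictAnti hg_anti hg_cont hg_bot hg_top (neg_lt_zero.2 hc)
  refine ⟨hg_anti, hg_bot, hg_top, zstar, hzero, hunique, fun z hz => ?_⟩
  refine lt_of_hasDerivAt_pos_of_neg (hasDerivAt_div_stdCcdf a c) (fun x hx => ?_)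
    (fun x hx => ?_) hz
  · exact div_pos (mul_pos (stdPdf_pos x) (hzero ▸ hg_anti hx)) (pow_pos (stdCcdf_pos x) 2)
  · exact div_neg_of_neg_of_pos (mul_neg_of_pos_of_neg (stdPdf_pos x) (hzero ▸ hg_anti hx))
      (pow_pos (stdCcdf_pos x) 2)
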